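/- Let A be a nontrivial closed class of decision tables from M_2^∞ and ψ a bounded complexity measure. If the function H^∞_{ψ,A} is everywhere defined, then for every n ∈ ℕ the value G_{ψ,A}(n) is defined and H^∞_{ψ,A}(n) ≥ G_{ψ,A}(n) − 1. -/

import Mathlib

open Classical

noncomputable section

/-- A decision table with many-valued decisions over `E_k = {0,…,k-1}`.
Columns are labeled with attributes `f_i` identified with their indices `i : ℕ`;
a row is a function `ℕ → ℕ` supported on the attribute set, with values `< k`;
each row is labeled with a nonempty finite set of decisions. -/
structure Table (k : ℕ) where
  attrs : Finset ℕ
  rows : Finset (ℕ → ℕ)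
  dec : (ℕ → ℕ) → Finset ℕ
  rows_mem : ∀ r ∈ rows, (∀ i ∈ attrs, r i < k) ∧ (∀ i ∉ attrs, r i = 0)
  dec_nonempty : ∀ r ∈ rows, (dec r).Nonempty

namespace Table

variable {k : ℕ}

/-- a row satisfies a word (a list of (attribute, value) pairs) -/
def rowSat (r : ℕ → ℕ) (α : List (ℕ × ℕ)) : Prop := ∀ q ∈ α, r q.1 = q.2

/-- the word belongs to `Ω_k(T)` -/
def wordOk (T : Table k) (α : List (ℕ × ℕ)) : Prop := ∀ q ∈ α, q.1 ∈ T.attrs ∧ q.2 < k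

/-- the subtable `Tα` -/
def applyWord (T : Table k) (α : List (ℕ × ℕ)) : Table k where
  attrs := T.attrs
  rows := T.rows.filter (fun r => rowSat r α)
  dec := T.dec
  rows_mem := fun r hr => T.rows_mem r (Finset.mem_filter.mp hr).1
  dec_nonempty := fun r hr => T.dec_nonempty r (Finset.mem_filter.mp hr).1

/-- `T ∈ M_k^{∞c}` : the table has a common decision -/
def hasCommon (T : Table k) : Prop := ∃ d : ℕ, ∀ r ∈ T.rows, d ∈ T.dec r

/-- `N(T)` : number of rows -/
def NT (T : Table k) : ℕ := T.rows.card

/-- `W(T)` : number of columns (`0` for the empty table `Λ`) -/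
def WT (T : Table k) : ℕ := if T.rows = ∅ then 0 else T.attrs.card

/-- the closure `[T]` of `T` under removal of columns and changing of decisions:
`Q = J(ν, I(D,T))` for some `D ⊆ At(T)` and some `ν` (the decision labeling of `Q`
on its rows is arbitrary, i.e. is the arbitrary `ν` with nonempty finite values). -/
def closureT (T : Table k) : Set (Table k) :=
  {Q | ∃ D : Finset ℕ, D ⊆ T.attrs ∧ Q.attrs = T.attrs \ D ∧
      Q.rows = T.rows.image (fun r i => if i ∈ T.attrs \ D then r i else 0)}

end Table

/-- a closed class: `[A] = A` -/
def IsClosedClass {k : ℕ} (A : Set (Table k)) : Prop := ∀ T ∈ A, Table.closureT T ⊆ A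

/-- a nontrivial class: contains nonempty tables -/
def NontrivialClass {k : ℕ} (A : Set (Table k)) : Prop := ∃ T ∈ A, T.rows.Nonempty

/-- the part of a `k`-decision tree below one edge leaving the root -/
inductive DTree (k : ℕ) : Type
  | leaf (d : ℕ) : DTree k
  | node (a : ℕ) (n : ℕ) (lab : Fin (n + 1) → ℕ) (ch : Fin (n + 1) → DTree k) : DTree k

namespace DTree

variable {k : ℕ}

/-- the set of pairs (π(τ), terminal decision) over complete paths τ -/
def paths : DTree k → Set (List (ℕ × ℕ) × ℕ)
  | leaf d => {([], d)}
  | node a _ lab ch =>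
      ⋃ i, (fun p : List (ℕ × ℕ) × ℕ => ((a, lab i) :: p.1, p.2)) '' paths (ch i)

/-- edge labels belong to `E_k` -/
def wf : DTree k → Prop
  | leaf _ => True
  | node _ _ lab ch => (∀ i, lab i < k) ∧ ∀ i, wf (ch i)

/-- edges leaving any node are labeled with pairwise different numbers -/
def det : DTree k → Prop
  | leaf _ => True
  | node _ _ lab ch => Function.Injective lab ∧ ∀ i, det (ch i)

/-- the set of attributes attached to nodes -/
def attrs : DTree k → Finset ℕ
  | leaf _ => ∅
  | node a _ _ ch => insert a (Finset.univ.biUnion fun i => attrs (ch i))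

end DTree

/-- a `k`-decision tree: an unlabeled root with `n+1` unlabeled edges leaving it -/
structure KTree (k : ℕ) where
  n : ℕ
  sub : Fin (n + 1) → DTree k

namespace KTree

variable {k : ℕ}

def paths (Γ : KTree k) : Set (List (ℕ × ℕ) × ℕ) := ⋃ i, (Γ.sub i).paths

def wf (Γ : KTree k) : Prop := ∀ i, (Γ.sub i).wf

def attrs (Γ : KTree k) : Finset ℕ := Finset.univ.biUnion fun i => (Γ.sub i).attrs

end KTree

/-- partially bounded complexity measure on words over `P` -/
structure PBCM where
  toFun : List ℕ → ℕ
  pos : ∀ α, toFun α = 0 ↔ α = []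
  perm : ∀ α β, List.Perm α β → toFun α = toFun β
  mono : ∀ α β, toFun α ≤ toFun (α ++ β)
  subadd : ∀ α β, toFun (α ++ β) ≤ toFun α + toFun β

/-- bounded complexity measure -/
structure BCM extends PBCM where
  bdd : ∀ α, α.length ≤ toFun α

/-- extension of ψ to words over pairs `(f_i, δ)` -/
def PBCM.onWord (ψ : PBCM) (α : List (ℕ × ℕ)) : ℕ := ψ.toFun (α.map Prod.fst)

/-- extension of ψ to finite sets of attributes -/
def PBCM.onSet (ψ : PBCM) (s : Finset ℕ) : ℕ := ψ.toFun (s.sort (· ≤ ·))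

/-- the depth `h` -/
def depthCM : BCM where
  toFun := List.length
  pos := fun α => List.length_eq_zero_iff
  perm := fun _ _ h => h.length_eq
  mono := fun α β => by simp
  subadd := fun α β => by simp
  bdd := fun _ => le_rfl

/-- `ψ(Γ)` : complexity of a decision tree -/
def treeComp {k : ℕ} (ψ : PBCM) (Γ : KTree k) : ℕ :=
  sSup {c | ∃ p ∈ Γ.paths, ψ.onWord p.1 = c}

/-- `Γ` is a nondeterministic decision tree for the (nonempty) table `T` -/
def isNDT {k : ℕ} (T : Table k) (Γ : KTree k) : Prop :=
  T.rows.Nonempty ∧ Γ.wf ∧ Γ.attrs ⊆ T.attrs ∧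
  (∀ r ∈ T.rows, ∃ p ∈ Γ.paths, Table.rowSat r p.1) ∧
  (∀ p ∈ Γ.paths, (T.applyWord p.1).rows = ∅ ∨ ∀ r ∈ (T.applyWord p.1).rows, p.2 ∈ T.dec r)

/-- `Γ` is a deterministic decision tree for `T` -/
def isDDT {k : ℕ} (T : Table k) (Γ : KTree k) : Prop :=
  isNDT T Γ ∧ Γ.n = 0 ∧ ∀ i, (Γ.sub i).det

/-- `ψ^a(T)` -/
def psiA {k : ℕ} (ψ : PBCM) (T : Table k) : ℕ :=
  sInf {c | ∃ Γ : KTree k, isNDT T Γ ∧ treeComp ψ Γ = c}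

/-- `ψ^d(T)` -/
def psiD {k : ℕ} (ψ : PBCM) (T : Table k) : ℕ :=
  sInf {c | ∃ Γ : KTree k, isDDT T Γ ∧ treeComp ψ Γ = c}

/-- `m_ψ(T)` -/
def mpsi {k : ℕ} (ψ : PBCM) (T : Table k) : ℕ :=
  if T.rows = ∅ then 0 else T.attrs.sup fun i => ψ.toFun [i]

/-- `W_ψ(T)` -/
def Wpsi {k : ℕ} (ψ : PBCM) (T : Table k) : ℕ :=
  if T.rows = ∅ then 0 else ψ.onSet T.attrs

/-- a tuple `δ̄ ∈ E_k^{|At(T)|}` -/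
def validTuple {k : ℕ} (T : Table k) (δ : ℕ → ℕ) : Prop :=
  (∀ i ∈ T.attrs, δ i < k) ∧ ∀ i ∉ T.attrs, δ i = 0

/-- `M_ψ(T, δ̄)` -/
def MpsiAt {k : ℕ} (ψ : PBCM) (T : Table k) (δ : ℕ → ℕ) : ℕ :=
  sInf {p | ∃ s : Finset ℕ, s ⊆ T.attrs ∧
    (T.applyWord ((s.sort (· ≤ ·)).map fun i => (i, δ i))).hasCommon ∧ ψ.onSet s = p}

/-- `M_ψ(T)` -/
def Mpsi {k : ℕ} (ψ : PBCM) (T : Table k) : ℕ :=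
  if T.hasCommon then 0 else sSup {p | ∃ δ, validTuple T δ ∧ MpsiAt ψ T δ = p}

/-- `U` is a `(ψ,n)`-cover of `T` -/
def isCover {k : ℕ} (ψ : PBCM) (n : ℕ) (T : Table k) (U : Finset (List (ℕ × ℕ))) : Prop :=
  (∀ α ∈ U, T.wordOk α ∧ ψ.onWord α ≤ n) ∧ ∀ r ∈ T.rows, ∃ α ∈ U, Table.rowSat r α

/-- `U` is an irreducible `(ψ,n)`-cover of `T` -/
def isIrredCover {k : ℕ} (ψ : PBCM) (n : ℕ) (T : Table k) (U : Finset (List (ℕ × ℕ))) : Prop :=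
  isCover ψ n T U ∧ ∀ V ⊂ U, ¬ isCover ψ n T V

/-- `l_ψ(T,n)` : maximum cardinality of an irreducible `(ψ,n)`-cover -/
def lpsi {k : ℕ} (ψ : PBCM) (T : Table k) (n : ℕ) : ℕ :=
  sSup {c | ∃ U, isIrredCover ψ n T U ∧ U.card = c}

/-- the set `{ψ^d(T) : T ∈ A, ψ^a(T) ≤ n}`; `H^∞_{ψ,A}(n)` is defined iff this set
is finite, and is then its maximum -/
def HSet {k : ℕ} (ψ : PBCM) (A : Set (Table k)) (n : ℕ) : Set ℕ :=
  {c | ∃ T ∈ A, psiA ψ T ≤ n ∧ psiD ψ T = c}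

/-- `H^∞_{ψ,A}(n)` (as the max = sSup of the finite set `HSet ψ A n`) -/
def Hfun {k : ℕ} (ψ : PBCM) (A : Set (Table k)) (n : ℕ) : ℕ := sSup (HSet ψ A n)

/-- the set `{l_ψ(T,n) : T ∈ A}` -/
def LSet {k : ℕ} (ψ : PBCM) (A : Set (Table k)) (n : ℕ) : Set ℕ :=
  {c | ∃ T ∈ A, lpsi ψ T n = c}

/-- `L_{ψ,A}(n)` -/
def Lfun {k : ℕ} (ψ : PBCM) (A : Set (Table k)) (n : ℕ) : ℕ := sSup (LSet ψ A n)

/-- `H_D` for an infinite `D ⊆ ℕ` : `H_D(n)` is the largest element of `D` that is `≤ n`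
(and `0` if there is none) -/
def HDfun (D : Set ℕ) (n : ℕ) : ℕ := sSup {d | d ∈ D ∧ d ≤ n}

/-- a complete table from `M_2^∞` -/
def isComplete (Q : Table 2) : Prop := Q.NT = 2 ^ Q.attrs.card

/-- `Z(T)` : maximum number of columns in a complete table from `[T]` (`0` if none) -/
def Zt (T : Table 2) : ℕ := sSup {c | ∃ Q ∈ Table.closureT T, isComplete Q ∧ Q.WT = c}

/-- the set `{Z(T) : T ∈ A_ψ(n)}` -/
def ZSet (ψ : PBCM) (A : Set (Table 2)) (n : ℕ) : Set ℕ :=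
  {c | ∃ T ∈ A, mpsi ψ T ≤ n ∧ Zt T = c}

/-- `Z_{ψ,A}(n)` -/
def Zfun (ψ : PBCM) (A : Set (Table 2)) (n : ℕ) : ℕ := sSup (ZSet ψ A n)

/-- annihilating word for `T` -/
def isAnnih (T : Table 2) (α : List (ℕ × ℕ)) : Prop :=
  T.wordOk α ∧ (∀ p ∈ α, ∀ q ∈ α, p.1 = q.1 → p.2 = q.2) ∧ (T.applyWord α).rows = ∅

/-- irreducible annihilating word for `T` -/
def isIrredAnnih (T : Table 2) (α : List (ℕ × ℕ)) : Prop :=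
  isAnnih T α ∧ ∀ β, β.Sublist α → β ≠ α → ¬ isAnnih T β

/-- `G(T)` : maximum length of an irreducible annihilating word (`0` if none) -/
def Gt (T : Table 2) : ℕ := sSup {c | ∃ α, isIrredAnnih T α ∧ α.length = c}

/-- the set `{G(T) : T ∈ A_ψ(n)}` -/
def GSet (ψ : PBCM) (A : Set (Table 2)) (n : ℕ) : Set ℕ :=
  {c | ∃ T ∈ A, mpsi ψ T ≤ n ∧ Gt T = c}

/-- `G_{ψ,A}(n)` -/
def Gfun (ψ : PBCM) (A : Set (Table 2)) (n : ℕ) : ℕ := sSup (GSet ψ A n)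

/-! ### The tables `T_k` and `T_k^*` built from the triangle-shaped graph `G_k` -/

/-- `m(k) = k(k+1)/2` : number of nodes of `G_k` -/
def mnum (k : ℕ) : ℕ := k * (k + 1) / 2

/-- the layer of node `i` of `G_k` : the unique `L` with `m(L-1) < i ≤ m(L)` -/
def layer (i : ℕ) : ℕ := sInf {L | i ≤ mnum L}

/-- left child `l(i) = i + layer i`; right child `p(i) = i + layer i + 1` -/
def lchild (i : ℕ) : ℕ := i + layer i

def rchild (i : ℕ) : ℕ := i + layer i + 1

/-- the map `ν_k : E_2^{m(k)} → P(ω)` -/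
def nuk (k : ℕ) (δ : ℕ → ℕ) : Finset ℕ :=
  (Finset.range (mnum k + 1)).filter fun i =>
    if i = 0 then δ 1 = 0
    else if layer i = k then δ i = 1
    else δ i = 1 ∧ δ (lchild i) = 0 ∧ δ (rchild i) = 0

/-- all tuples over `E_k` supported on the attribute set `s` -/
def allRows (k : ℕ) (s : Finset ℕ) : Finset (ℕ → ℕ) :=
  (s.pi fun _ => Finset.range k).image fun f i => if h : i ∈ s then f i h else 0

/-- the table with attribute set `s`, all possible rows, and decision labeling `d` -/
def fullTable (k : ℕ) (s : Finset ℕ) (d : (ℕ → ℕ) → Finset ℕ) : Table k where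
  attrs := s
  rows := allRows k s
  dec := fun r => if (d r).Nonempty then d r else {0}
  rows_mem := by
    intro r hr
    simp only [allRows, Finset.mem_image] at hr
    obtain ⟨f, hf, rfl⟩ := hr
    refine ⟨fun i hi => ?_, fun i hi => ?_⟩
    · have h := (Finset.mem_pi.mp hf) i hi
      simp only [Finset.mem_range] at h
      simpa [hi] using h
    · simp [hi]
  dec_nonempty := by
    intro r _
    by_cases h : (d r).Nonempty
    · simp [h]
    · simp [h]

/-- the complete table `T_k` with `m(k)` columns `f_1, …, f_{m(k)}` and `2^{m(k)}` rows,
each row `δ̄` labeled with `ν_k(δ̄)` (which is always nonempty) -/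
def Tk (k : ℕ) : Table 2 := fullTable 2 (Finset.Icc 1 (mnum k)) (nuk k)

/-- the `j`-th node of the complete path of `G_k` determined by the choices `c` -/
def pathNode (c : ℕ → Bool) : ℕ → ℕ
  | 0 => 1
  | j + 1 => if c j then lchild (pathNode c j) else rchild (pathNode c j)

/-- `T_k^*` : the subtable of `T_k` whose rows are exactly the characteristic tuples
of complete paths of `G_k` -/
def Tstar (k : ℕ) : Table 2 where
  attrs := (Tk k).attrs
  rows := (Tk k).rows.filter fun r =>
    ∃ c : ℕ → Bool, ∀ i ∈ Finset.Icc 1 (mnum k), (r i = 1 ↔ ∃ j < k, pathNode c j = i)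
  dec := (Tk k).dec
  rows_mem := fun r hr => (Tk k).rows_mem r (Finset.mem_filter.mp hr).1
  dec_nonempty := fun r hr => (Tk k).dec_nonempty r (Finset.mem_filter.mp hr).1

/-- `r(T)` for a subtable `T` of `T_k^*` : the number of distinct decision sets
`ν_k(δ̄)` among the rows `δ̄` of `T` -/
def rnum (k : ℕ) (T : Table 2) : ℕ := (T.rows.image (nuk k)).card

end

/-!
Let `α` be an irreducible annihilating word of a table `T ∈ A` with `m_ψ(T) ≤ n`. By
irreducibility, for every letter `(f_i, δ)` of `α` some row of `T` violates this letter and no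
other. Keep only the columns of `α` and label each row by the set of attributes at which it
violates `α`: the resulting table `Q` lies in `[T] ⊆ A`. Every row of `Q` satisfies some letter
`(f_i, 1 - δ)`, which alone forces the decision `i`, so `ψ^a(Q) ≤ n`. The `|α|` witness rows have
pairwise different decisions, and a deterministic tree that answers each query `f_i` by `δ` drops
at most one witness per query, so it has a path of length at least `|α| - 1`; as `ψ` is bounded,
`ψ^d(Q) ≥ |α| - 1`. Hence `G(T) - 1 ≤ H^∞_{ψ,A}(n)` for every `T ∈ A_ψ(n)`.
-/

namespace Table

variable {k : ℕ}

@[simp]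
theorem rowSat_nil (r : ℕ → ℕ) : rowSat r [] := by
  simp [rowSat]

@[simp]
theorem rowSat_cons {r : ℕ → ℕ} {q : ℕ × ℕ} {α : List (ℕ × ℕ)} :
    rowSat r (q :: α) ↔ r q.1 = q.2 ∧ rowSat r α := by
  simp [rowSat]

theorem mem_applyWord_rows {T : Table k} {α : List (ℕ × ℕ)} {r : ℕ → ℕ} :
    r ∈ (T.applyWord α).rows ↔ r ∈ T.rows ∧ rowSat r α :=
  Finset.mem_filter

theorem eq_of_mem_rows {T : Table k} {r r' : ℕ → ℕ} (hr : r ∈ T.rows) (hr' : r' ∈ T.rows)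
    (h : ∀ i ∈ T.attrs, r i = r' i) : r = r' := by
  funext i
  by_cases hi : i ∈ T.attrs
  · exact h i hi
  · rw [(T.rows_mem r hr).2 i hi, (T.rows_mem r' hr').2 i hi]

theorem hasCommon_applyWord {T : Table k} {w : List (ℕ × ℕ)}
    (hw : T.attrs ⊆ (w.map Prod.fst).toFinset) : (T.applyWord w).hasCommon := by
  obtain hemp | ⟨r₀, hr₀⟩ := (T.applyWord w).rows.eq_empty_or_nonempty
  · exact ⟨0, by simp [hemp]⟩
  obtain ⟨e, he⟩ := T.dec_nonempty r₀ (mem_applyWord_rows.mp hr₀).1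
  refine ⟨e, fun r hr => ?_⟩
  rw [mem_applyWord_rows] at hr hr₀
  have hrr₀ : r = r₀ := eq_of_mem_rows hr.1 hr₀.1 fun i hi => by
    obtain ⟨q, hq, rfl⟩ := List.mem_map.mp (List.mem_toFinset.mp (hw hi))
    rw [hr.2 q hq, hr₀.2 q hq]
  exact hrr₀ ▸ he

def restrictRow (E : Finset ℕ) (r : ℕ → ℕ) : ℕ → ℕ := fun i => if i ∈ E then r i else 0

theorem restrictRow_of_mem {E : Finset ℕ} (r : ℕ → ℕ) {i : ℕ} (hi : i ∈ E) :
    restrictRow E r i = r i :=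
  if_pos hi

/-- The table `J(ν, I(At(T) \ E, T))` of the closure `[T]`. -/
noncomputable def restrict (T : Table k) (E : Finset ℕ) (hE : E ⊆ T.attrs)
    (ν : (ℕ → ℕ) → Finset ℕ) (hν : ∀ r ∈ T.rows, (ν (restrictRow E r)).Nonempty) : Table k where
  attrs := E
  rows := T.rows.image (restrictRow E)
  dec := ν
  rows_mem := by
    simp only [Finset.mem_image]
    rintro _ ⟨r, hr, rfl⟩
    refine ⟨fun i hi => ?_, fun i hi => if_neg hi⟩
    rw [restrictRow_of_mem r hi]
    exact (T.rows_mem r hr).1 i (hE hi)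
  dec_nonempty := by
    simp only [Finset.mem_image]
    rintro _ ⟨r, hr, rfl⟩
    exact hν r hr

theorem restrict_mem_closureT (T : Table k) (E : Finset ℕ) (hE : E ⊆ T.attrs)
    (ν : (ℕ → ℕ) → Finset ℕ) (hν : ∀ r ∈ T.rows, (ν (restrictRow E r)).Nonempty) :
    T.restrict E hE ν hν ∈ T.closureT := by
  have hsdiff : T.attrs \ (T.attrs \ E) = E := Finset.sdiff_sdiff_eq_self hE
  exact ⟨T.attrs \ E, Finset.sdiff_subset, hsdiff.symm, by simp only [hsdiff]; rfl⟩

end Table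

namespace DTree

variable {k : ℕ}

theorem mem_paths_node {a n : ℕ} {lab : Fin (n + 1) → ℕ} {ch : Fin (n + 1) → DTree k}
    {p : List (ℕ × ℕ) × ℕ} :
    p ∈ (node a n lab ch).paths ↔ ∃ i, ∃ q ∈ (ch i).paths, ((a, lab i) :: q.1, q.2) = p := by
  simp only [paths, Set.mem_iUnion, Set.mem_image]

theorem paths_nonempty (t : DTree k) : t.paths.Nonempty := by
  induction t with
  | leaf d => exact Set.singleton_nonempty _
  | node a n lab ch ih =>
    obtain ⟨q, hq⟩ := ih 0
    exact ⟨_, mem_paths_node.mpr ⟨0, q, hq, rfl⟩⟩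

theorem paths_finite (t : DTree k) : t.paths.Finite := by
  induction t with
  | leaf d => exact Set.finite_singleton _
  | node a n lab ch ih => exact Set.finite_iUnion fun i => (ih i).image _

theorem attrs_child_subset {a n : ℕ} {lab : Fin (n + 1) → ℕ} {ch : Fin (n + 1) → DTree k}
    (i : Fin (n + 1)) : (ch i).attrs ⊆ (node a n lab ch).attrs :=
  fun _ hb => Finset.mem_insert_of_mem (Finset.mem_biUnion.mpr ⟨i, Finset.mem_univ i, hb⟩)

def query (q : ℕ × ℕ) (d : ℕ) : DTree k := node q.1 0 (fun _ => q.2) fun _ => leaf d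

@[simp]
theorem paths_query (q : ℕ × ℕ) (d : ℕ) : (query q d : DTree k).paths = {([q], d)} := by
  ext p
  simp [query, paths]

@[simp]
theorem attrs_query (q : ℕ × ℕ) (d : ℕ) : (query q d : DTree k).attrs = {q.1} := by
  simp [query, attrs]

/-- The complete tree querying the attributes of `L` in turn; `w` is the word of answers already
given, and a leaf is labeled by `d` applied to the whole word leading to it. -/
def complete (k : ℕ) (d : List (ℕ × ℕ) → ℕ) : List ℕ → List (ℕ × ℕ) → DTree (k + 1)
  | [], w => leaf (d w)
  | a :: L, w => node a k (fun i => i.val) fun i => complete k d L (w ++ [(a, i.val)])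

section Complete

variable (d : List (ℕ × ℕ) → ℕ)

theorem complete_det : ∀ (L : List ℕ) (w : List (ℕ × ℕ)), (complete k d L w).det
  | [], _ => trivial
  | _ :: L, _ => ⟨Fin.val_injective, fun _ => complete_det L _⟩

theorem complete_wf : ∀ (L : List ℕ) (w : List (ℕ × ℕ)), (complete k d L w).wf
  | [], _ => trivial
  | _ :: L, _ => ⟨Fin.isLt, fun _ => complete_wf L _⟩

theorem attrs_complete_subset :
    ∀ (L : List ℕ) (w : List (ℕ × ℕ)), (complete k d L w).attrs ⊆ L.toFinset
  | [], _ => by simp [complete, attrs]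
  | a :: L, w => by
    intro b hb
    simp only [complete, attrs, Finset.mem_insert, Finset.mem_biUnion] at hb
    rcases hb with rfl | ⟨i, -, hb⟩
    · simp
    · simpa using Or.inr (attrs_complete_subset L _ hb)

theorem mem_paths_complete : ∀ (L : List ℕ) (w : List (ℕ × ℕ)) (p : List (ℕ × ℕ) × ℕ),
    p ∈ (complete k d L w).paths → p.1.map Prod.fst = L ∧ p.2 = d (w ++ p.1)
  | [], w, p, hp => by
    simp only [complete, paths, Set.mem_singleton_iff] at hp
    simp [hp]
  | a :: L, w, p, hp => by
    obtain ⟨i, q, hq, rfl⟩ := mem_paths_node.mp hp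
    obtain ⟨hL, hd⟩ := mem_paths_complete L _ q hq
    simp [hL, hd]

theorem exists_mem_paths_complete (r : ℕ → ℕ) :
    ∀ (L : List ℕ) (w : List (ℕ × ℕ)), (∀ a ∈ L, r a < k + 1) →
      ∃ p ∈ (complete k d L w).paths, Table.rowSat r p.1
  | [], w, _ => ⟨([], d w), rfl, Table.rowSat_nil r⟩
  | a :: L, w, hr => by
    obtain ⟨q, hq, hsat⟩ :=
      exists_mem_paths_complete r L (w ++ [(a, r a)]) fun b hb => hr b (List.mem_cons_of_mem a hb)
    exact ⟨_, mem_paths_node.mpr ⟨⟨r a, hr a List.mem_cons_self⟩, q, hq, rfl⟩,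
      Table.rowSat_cons.mpr ⟨rfl, hsat⟩⟩

end Complete

/-- Adversary argument: answer every query `b` by the value `v` on which all but at most one
of the rows agree. -/
theorem exists_path_card_le_length_add_one {ι : Type*} (t : DTree k) (ht : t.det)
    (S : Finset ι) (ρ : ι → ℕ → ℕ)
    (hcenter : ∀ b ∈ t.attrs, ∃ v, ∀ i ∈ S, ∀ j ∈ S, ρ i b ≠ v → ρ j b ≠ v → i = j)
    (hcover : ∀ i ∈ S, ∃ p ∈ t.paths, Table.rowSat (ρ i) p.1)
    (hsep : ∀ p ∈ t.paths, ∀ i ∈ S, ∀ j ∈ S,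
      Table.rowSat (ρ i) p.1 → Table.rowSat (ρ j) p.1 → i = j) :
    ∃ p ∈ t.paths, S.card ≤ p.1.length + 1 := by
  induction t generalizing S with
  | leaf d =>
    refine ⟨([], d), rfl, ?_⟩
    simpa using Finset.card_le_one.mpr fun i hi j hj => hsep _ rfl i hi j hj (by simp) (by simp)
  | node a n lab ch ih =>
    obtain ⟨v, hv⟩ := hcenter a (Finset.mem_insert_self _ _)
    set S' := S.filter fun i => ρ i a = v
    have hS : S.card ≤ S'.card + 1 := by
      rw [← Finset.card_filter_add_card_filter_not (p := fun i => ρ i a = v)]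
      gcongr
      exact Finset.card_le_one.mpr fun i hi j hj =>
        hv i (Finset.mem_filter.mp hi).1 j (Finset.mem_filter.mp hj).1
          (Finset.mem_filter.mp hi).2 (Finset.mem_filter.mp hj).2
    obtain hS' | ⟨i₀, hi₀⟩ := S'.eq_empty_or_nonempty
    · obtain ⟨p, hp⟩ := (node a n lab ch).paths_nonempty
      exact ⟨p, hp, by rw [hS', Finset.card_empty] at hS; omega⟩
    · have hS'S : ∀ i ∈ S', i ∈ S ∧ ρ i a = v := fun i hi => Finset.mem_filter.mp hi
      have hchild : ∀ i ∈ S', ∃ c, lab c = v ∧ ∃ q ∈ (ch c).paths, Table.rowSat (ρ i) q.1 := by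
        intro i hi
        obtain ⟨p, hp, hsat⟩ := hcover i (hS'S i hi).1
        obtain ⟨c, q, hq, rfl⟩ := mem_paths_node.mp hp
        rw [Table.rowSat_cons] at hsat
        exact ⟨c, hsat.1.symm.trans (hS'S i hi).2, q, hq, hsat.2⟩
      obtain ⟨c, hc, -⟩ := hchild i₀ hi₀
      obtain ⟨q, hq, hlen⟩ := ih c (ht.2 c) S'
        (fun b hb => (hcenter b (attrs_child_subset c hb)).imp fun w hw i hi j hj =>
          hw i (hS'S i hi).1 j (hS'S j hj).1)
        (fun i hi => by
          obtain ⟨c', hc', hq'⟩ := hchild i hi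
          rwa [ht.1 (hc'.trans hc.symm)] at hq')
        (fun q hq i hi j hj hsi hsj => hsep _ (mem_paths_node.mpr ⟨c, q, hq, rfl⟩) i (hS'S i hi).1
          j (hS'S j hj).1 (Table.rowSat_cons.mpr ⟨(hS'S i hi).2.trans hc.symm, hsi⟩)
          (Table.rowSat_cons.mpr ⟨(hS'S j hj).2.trans hc.symm, hsj⟩))
      exact ⟨_, mem_paths_node.mpr ⟨c, q, hq, rfl⟩, by simp only [List.length_cons]; omega⟩

end DTree

namespace KTree

variable {k : ℕ}

theorem paths_finite (Γ : KTree k) : Γ.paths.Finite :=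
  Set.finite_iUnion fun i => (Γ.sub i).paths_finite

theorem paths_eq_of_n_eq_zero {Γ : KTree k} (h : Γ.n = 0) : Γ.paths = (Γ.sub 0).paths := by
  refine Set.iUnion_eq_const fun i => ?_
  rw [Fin.ext (by omega : (i : ℕ) = (0 : Fin (Γ.n + 1)))]

/-- Junk if `l = []`, since a root has at least one edge. -/
def ofList (l : List (DTree k)) : KTree k := ⟨l.length - 1, fun i => l.getD i (DTree.leaf 0)⟩

theorem exists_sub_ofList_eq_iff {l : List (DTree k)} (hl : l ≠ []) {t : DTree k} :
    (∃ i, (ofList l).sub i = t) ↔ t ∈ l := by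
  have hlen := List.length_pos_iff.mpr hl
  constructor
  · rintro ⟨⟨i, hi⟩, rfl⟩
    have hi : i < l.length := by simp only [ofList] at hi; omega
    simp only [ofList, List.getD_eq_getElem _ _ hi, List.getElem_mem]
  · intro ht
    obtain ⟨i, hi, rfl⟩ := List.mem_iff_getElem.mp ht
    exact ⟨⟨i, by simp only [ofList]; omega⟩, List.getD_eq_getElem _ _ hi⟩

theorem mem_paths_ofList {l : List (DTree k)} (hl : l ≠ []) {p : List (ℕ × ℕ) × ℕ} :
    p ∈ (ofList l).paths ↔ ∃ t ∈ l, p ∈ t.paths := by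
  simp only [paths, Set.mem_iUnion, ← exists_sub_ofList_eq_iff hl]
  exact ⟨fun ⟨i, h⟩ => ⟨_, ⟨i, rfl⟩, h⟩, fun ⟨_, ⟨i, hi⟩, h⟩ => ⟨i, hi ▸ h⟩⟩

theorem mem_attrs_ofList {l : List (DTree k)} (hl : l ≠ []) {b : ℕ} :
    b ∈ (ofList l).attrs ↔ ∃ t ∈ l, b ∈ t.attrs := by
  simp only [attrs, Finset.mem_biUnion, Finset.mem_univ, true_and, ← exists_sub_ofList_eq_iff hl]
  exact ⟨fun ⟨i, h⟩ => ⟨_, ⟨i, rfl⟩, h⟩, fun ⟨_, ⟨i, hi⟩, h⟩ => ⟨i, hi ▸ h⟩⟩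

theorem wf_ofList {l : List (DTree k)} (hl : l ≠ []) (h : ∀ t ∈ l, t.wf) : (ofList l).wf :=
  fun i => h _ ((exists_sub_ofList_eq_iff hl).mp ⟨i, rfl⟩)

end KTree

theorem exists_isDDT {k : ℕ} (T : Table (k + 1)) (hT : T.rows.Nonempty) : ∃ Γ, isDDT T Γ := by
  set d : List (ℕ × ℕ) → ℕ := fun w => if h : (T.applyWord w).hasCommon then h.choose else 0
  set L := T.attrs.sort (· ≤ ·)
  let Γ : KTree (k + 1) := ⟨0, fun _ => DTree.complete k d L []⟩
  have hpaths : Γ.paths = (DTree.complete k d L []).paths := KTree.paths_eq_of_n_eq_zero rfl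
  refine ⟨Γ, ⟨hT, fun _ => DTree.complete_wf d L [], ?_, ?_, ?_⟩, rfl,
    fun _ => DTree.complete_det d L []⟩
  · intro b hb
    obtain ⟨_, _, hb⟩ := Finset.mem_biUnion.mp hb
    simpa [L] using DTree.attrs_complete_subset d L [] hb
  · intro r hr
    rw [hpaths]
    exact DTree.exists_mem_paths_complete d r L [] fun a ha =>
      (T.rows_mem r hr).1 a (by simpa [L] using ha)
  · intro p hp
    rw [hpaths] at hp
    obtain ⟨hL, hd⟩ := DTree.mem_paths_complete d L [] p hp
    have hcommon : (T.applyWord p.1).hasCommon :=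
      Table.hasCommon_applyWord fun i hi => by simpa [hL, L] using hi
    right
    rw [hd, List.nil_append]
    simp only [d, dif_pos hcommon]
    exact hcommon.choose_spec

section Complexity

variable {k : ℕ}

theorem toFun_singleton_le_mpsi (ψ : PBCM) {T : Table k} (hT : T.rows.Nonempty) {b : ℕ}
    (hb : b ∈ T.attrs) : ψ.toFun [b] ≤ mpsi ψ T := by
  rw [mpsi, if_neg hT.ne_empty]
  exact Finset.le_sup (f := fun i => ψ.toFun [i]) hb

theorem onWord_le_treeComp (ψ : PBCM) {Γ : KTree k} {p : List (ℕ × ℕ) × ℕ} (hp : p ∈ Γ.paths) :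
    ψ.onWord p.1 ≤ treeComp ψ Γ :=
  le_csSup ((Γ.paths_finite.image fun p : List (ℕ × ℕ) × ℕ => ψ.onWord p.1).bddAbove) ⟨p, hp, rfl⟩

theorem treeComp_le (ψ : PBCM) {Γ : KTree k} {c : ℕ} (h : ∀ p ∈ Γ.paths, ψ.onWord p.1 ≤ c) :
    treeComp ψ Γ ≤ c :=
  csSup_le' fun _ ⟨p, hp, hc⟩ => hc ▸ h p hp

theorem psiA_le_treeComp (ψ : PBCM) {T : Table k} {Γ : KTree k} (hΓ : isNDT T Γ) :
    psiA ψ T ≤ treeComp ψ Γ :=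
  Nat.sInf_le ⟨Γ, hΓ, rfl⟩

theorem BCM.length_le_onWord (ψ : BCM) (α : List (ℕ × ℕ)) : α.length ≤ ψ.onWord α := by
  simpa [PBCM.onWord] using ψ.bdd (α.map Prod.fst)

theorem psiA_le_of_letters (ψ : PBCM) (T : Table k) (hT : T.rows.Nonempty)
    (L : List (ℕ × ℕ)) (d : ℕ × ℕ → ℕ) (n : ℕ) (hL : T.wordOk L)
    (hcover : ∀ r ∈ T.rows, ∃ q ∈ L, r q.1 = q.2)
    (hdec : ∀ q ∈ L, ∀ r ∈ T.rows, r q.1 = q.2 → d q ∈ T.dec r)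
    (hψ : ∀ q ∈ L, ψ.toFun [q.1] ≤ n) :
    psiA ψ T ≤ n := by
  set l : List (DTree k) := L.map fun q => DTree.query q (d q)
  have hl : l ≠ [] := by
    obtain ⟨r, hr⟩ := hT
    obtain ⟨q, hq, -⟩ := hcover r hr
    exact List.ne_nil_of_mem (List.mem_map_of_mem hq)
  have hpaths : ∀ p, p ∈ (KTree.ofList l).paths ↔ ∃ q ∈ L, ([q], d q) = p := by
    intro p
    simp [KTree.mem_paths_ofList hl, l, eq_comm]
  have hNDT : isNDT T (KTree.ofList l) := by
    refine ⟨hT, KTree.wf_ofList hl ?_, ?_, ?_, ?_⟩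
    · simp only [l, List.mem_map]
      rintro _ ⟨q, hq, rfl⟩
      exact ⟨fun _ => (hL q hq).2, fun _ => trivial⟩
    · intro b hb
      obtain ⟨_, ht, hb⟩ := (KTree.mem_attrs_ofList hl).mp hb
      obtain ⟨q, hq, rfl⟩ := List.mem_map.mp ht
      rw [DTree.attrs_query, Finset.mem_singleton] at hb
      exact hb ▸ (hL q hq).1
    · intro r hr
      obtain ⟨q, hq, hrq⟩ := hcover r hr
      exact ⟨_, (hpaths _).mpr ⟨q, hq, rfl⟩, by simpa using hrq⟩
    · intro p hp
      obtain ⟨q, hq, rfl⟩ := (hpaths p).mp hp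
      refine Or.inr fun r hr => ?_
      obtain ⟨hrT, hrq⟩ := Table.mem_applyWord_rows.mp hr
      exact hdec q hq r hrT (by simpa using hrq)
  refine (psiA_le_treeComp ψ hNDT).trans (treeComp_le ψ fun p hp => ?_)
  obtain ⟨q, hq, rfl⟩ := (hpaths p).mp hp
  exact hψ q hq

theorem card_le_psiD_add_one {ι : Type*} (ψ : BCM) {T : Table k} (hT : ∃ Γ, isDDT T Γ)
    (S : Finset ι) (ρ : ι → ℕ → ℕ) (hρ : ∀ i ∈ S, ρ i ∈ T.rows)
    (hcenter : ∀ b ∈ T.attrs, ∃ v, ∀ i ∈ S, ∀ j ∈ S, ρ i b ≠ v → ρ j b ≠ v → i = j)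
    (hdec : (S : Set ι).PairwiseDisjoint fun i => T.dec (ρ i)) :
    S.card ≤ psiD ψ.toPBCM T + 1 := by
  obtain ⟨Γ, ⟨hNDT, hn, hdet⟩, hΓ⟩ :=
    Nat.sInf_mem (s := {c | ∃ Γ : KTree k, isDDT T Γ ∧ treeComp ψ.toPBCM Γ = c})
      (let ⟨Γ, h⟩ := hT; ⟨_, Γ, h, rfl⟩)
  have hpaths := KTree.paths_eq_of_n_eq_zero hn
  obtain ⟨p, hp, hlen⟩ := (Γ.sub 0).exists_path_card_le_length_add_one (hdet 0) S ρ
    (fun b hb => hcenter b (hNDT.2.2.1 (Finset.mem_biUnion.mpr ⟨0, Finset.mem_univ _, hb⟩)))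
    (fun i hi => hpaths ▸ hNDT.2.2.2.1 (ρ i) (hρ i hi))
    (fun p hp i hi j hj hsi hsj => by
      have hri : ρ i ∈ (T.applyWord p.1).rows := Table.mem_applyWord_rows.mpr ⟨hρ i hi, hsi⟩
      have hrj : ρ j ∈ (T.applyWord p.1).rows := Table.mem_applyWord_rows.mpr ⟨hρ j hj, hsj⟩
      obtain hemp | hcommon := hNDT.2.2.2.2 p (hpaths ▸ hp)
      · simp [hemp] at hri
      · by_contra hij
        exact Finset.disjoint_left.mp (hdec hi hj hij) (hcommon _ hri) (hcommon _ hrj))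
  calc S.card ≤ p.1.length + 1 := hlen
    _ ≤ ψ.toPBCM.onWord p.1 + 1 := by gcongr; exact ψ.length_le_onWord p.1
    _ ≤ psiD ψ.toPBCM T + 1 := by
      gcongr
      rw [psiD, ← hΓ]
      exact onWord_le_treeComp _ (hpaths ▸ hp)

end Complexity

def violatedAttrs (α : List (ℕ × ℕ)) (r : ℕ → ℕ) : Finset ℕ :=
  (α.toFinset.filter fun q => r q.1 ≠ q.2).image Prod.fst

theorem mem_violatedAttrs {α : List (ℕ × ℕ)} {r : ℕ → ℕ} {b : ℕ} :
    b ∈ violatedAttrs α r ↔ ∃ q ∈ α, r q.1 ≠ q.2 ∧ q.1 = b := by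
  simp [violatedAttrs, and_assoc]

theorem violatedAttrs_restrictRow {α : List (ℕ × ℕ)} (r : ℕ → ℕ) :
    violatedAttrs α (Table.restrictRow (α.map Prod.fst).toFinset r) = violatedAttrs α r := by
  ext b
  simp only [mem_violatedAttrs]
  refine exists_congr fun q => and_congr_right fun hq => ?_
  rw [Table.restrictRow_of_mem r (by simpa using ⟨q.2, hq⟩)]

namespace isAnnih

variable {T : Table 2} {α : List (ℕ × ℕ)}

theorem fst_subset_attrs (h : isAnnih T α) : (α.map Prod.fst).toFinset ⊆ T.attrs := by
  intro b hb
  obtain ⟨q, hq, rfl⟩ := List.mem_map.mp (List.mem_toFinset.mp hb)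
  exact (h.1 q hq).1

theorem exists_violated (h : isAnnih T α) {r : ℕ → ℕ} (hr : r ∈ T.rows) :
    ∃ q ∈ α, r q.1 ≠ q.2 := by
  by_contra! hsat
  have : r ∈ (T.applyWord α).rows := Table.mem_applyWord_rows.mpr ⟨hr, hsat⟩
  simp [h.2.2] at this

theorem violatedAttrs_nonempty (h : isAnnih T α) {r : ℕ → ℕ} (hr : r ∈ T.rows) :
    (violatedAttrs α r).Nonempty :=
  let ⟨q, hq, hrq⟩ := h.exists_violated hr
  ⟨q.1, mem_violatedAttrs.mpr ⟨q, hq, hrq, rfl⟩⟩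

noncomputable def violationTable (h : isAnnih T α) : Table 2 :=
  T.restrict (α.map Prod.fst).toFinset h.fst_subset_attrs (violatedAttrs α) fun r hr => by
    rw [violatedAttrs_restrictRow]
    exact h.violatedAttrs_nonempty hr

theorem violationTable_mem_closureT (h : isAnnih T α) : h.violationTable ∈ T.closureT :=
  T.restrict_mem_closureT _ _ _ _

theorem eq_of_fst_eq (h : isAnnih T α) {p q : ℕ × ℕ} (hp : p ∈ α) (hq : q ∈ α)
    (hpq : p.1 = q.1) : p = q :=
  Prod.ext hpq (h.2.1 p hp q hq hpq)

/-- Every row of the violation table violates a letter `(f_i, δ)`, so it satisfies `(f_i, 1 - δ)`,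
which alone forces the decision `i`. -/
theorem psiA_violationTable_le (ψ : PBCM) (h : isAnnih T α) (hT : T.rows.Nonempty) {n : ℕ}
    (hmT : mpsi ψ T ≤ n) : psiA ψ h.violationTable ≤ n := by
  refine psiA_le_of_letters ψ _ (hT.image _) (α.map fun q => (q.1, 1 - q.2)) Prod.fst n ?_ ?_ ?_ ?_
  · simp only [Table.wordOk, List.mem_map]
    rintro _ ⟨q, hq, rfl⟩
    show q.1 ∈ (α.map Prod.fst).toFinset ∧ 1 - q.2 < 2
    exact ⟨List.mem_toFinset.mpr (List.mem_map_of_mem hq), by omega⟩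
  · rintro _ hρ
    obtain ⟨r, hr, rfl⟩ := Finset.mem_image.mp hρ
    obtain ⟨q, hq, hrq⟩ := h.exists_violated hr
    have hq1 : q.1 ∈ (α.map Prod.fst).toFinset := List.mem_toFinset.mpr (List.mem_map_of_mem hq)
    have hr2 := (T.rows_mem r hr).1 q.1 (h.fst_subset_attrs hq1)
    have hq2 := (h.1 q hq).2
    exact ⟨_, List.mem_map.mpr ⟨q, hq, rfl⟩, by rw [Table.restrictRow_of_mem r hq1]; omega⟩
  · simp only [List.mem_map]
    rintro _ ⟨q, hq, rfl⟩ ρ - hρq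
    exact mem_violatedAttrs.mpr ⟨q, hq, by simp only at hρq; omega, rfl⟩
  · simp only [List.mem_map]
    rintro _ ⟨q, hq, rfl⟩
    exact (toFun_singleton_le_mpsi ψ hT (h.fst_subset_attrs
      (List.mem_toFinset.mpr (List.mem_map_of_mem hq)))).trans hmT

end isAnnih

namespace isIrredAnnih

variable {T : Table 2} {α : List (ℕ × ℕ)}

theorem nodup_fst (h : isIrredAnnih T α) : (α.map Prod.fst).Nodup := by
  have hnd : α.Nodup := by
    by_contra hnd
    refine h.2 α.dedup α.dedup_sublist (fun he => hnd (he ▸ α.nodup_dedup)) ⟨fun q hq =>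
      h.1.1 q (List.mem_dedup.mp hq), fun p hp q hq =>
      h.1.2.1 p (List.mem_dedup.mp hp) q (List.mem_dedup.mp hq), ?_⟩
    rw [← h.1.2.2]
    exact Finset.filter_congr fun r _ => by simp only [Table.rowSat, List.mem_dedup]
  exact hnd.map_on fun p hp q hq => h.1.eq_of_fst_eq hp hq

theorem rows_nonempty (h : isIrredAnnih T α) (hα : α ≠ []) : T.rows.Nonempty := by
  rw [Finset.nonempty_iff_ne_empty]
  intro hT
  refine h.2 [] (List.nil_sublist α) hα.symm ⟨by simp [Table.wordOk], by simp, ?_⟩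
  simp only [Table.applyWord, hT, Finset.filter_empty]

theorem exists_violatedAttrs_eq_singleton (h : isIrredAnnih T α) {q : ℕ × ℕ} (hq : q ∈ α) :
    ∃ r ∈ T.rows, violatedAttrs α r = {q.1} := by
  have hsub : (α.erase q).Sublist α := α.erase_sublist
  have hne : α.erase q ≠ α := fun he => by
    have := List.length_erase_of_mem hq
    have := congrArg List.length he
    have := List.length_pos_of_mem hq
    omega
  obtain ⟨r, hr⟩ : (T.applyWord (α.erase q)).rows.Nonempty := by
    rw [Finset.nonempty_iff_ne_empty]
    exact fun hemp => h.2 _ hsub hne ⟨fun p hp => h.1.1 p (hsub.subset hp),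
      fun p hp p' hp' => h.1.2.1 p (hsub.subset hp) p' (hsub.subset hp'), hemp⟩
  obtain ⟨hrT, hrsat⟩ := Table.mem_applyWord_rows.mp hr
  have hviol : ∀ q' ∈ α, r q'.1 ≠ q'.2 → q' = q := fun q' hq' hrq' => by
    by_contra hne'
    exact hrq' (hrsat q' ((List.mem_erase_of_ne hne').mpr hq'))
  refine ⟨r, hrT, Finset.eq_singleton_iff_unique_mem.mpr ⟨?_, ?_⟩⟩
  · obtain ⟨q', hq', hrq'⟩ := h.1.exists_violated hrT
    exact mem_violatedAttrs.mpr ⟨q, hq, hviol q' hq' hrq' ▸ hrq', rfl⟩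
  · intro b hb
    obtain ⟨q', hq', hrq', rfl⟩ := mem_violatedAttrs.mp hb
    rw [hviol q' hq' hrq']

/-- The witnesses of `exists_violatedAttrs_eq_singleton` have disjoint decision sets, and at the
attribute of a letter only the witness of that letter differs from `α`. -/
theorem length_le_psiD_violationTable_add_one (ψ : BCM) (h : isIrredAnnih T α)
    (hT : T.rows.Nonempty) : α.length ≤ psiD ψ.toPBCM h.1.violationTable + 1 := by
  choose! w hwT hw using fun q (hq : q ∈ α) => h.exists_violatedAttrs_eq_singleton hq
  set E := (α.map Prod.fst).toFinset
  have hdec : ∀ q ∈ α, h.1.violationTable.dec (Table.restrictRow E (w q)) = {q.1} := fun q hq =>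
    (violatedAttrs_restrictRow (w q)).trans (hw q hq)
  rw [← List.toFinset_card_of_nodup (h.nodup_fst.of_map _)]
  refine card_le_psiD_add_one ψ (exists_isDDT (k := 1) _ (hT.image _)) α.toFinset
    (fun q => Table.restrictRow E (w q)) (fun q hq => Finset.mem_image_of_mem _ (hwT q
      (List.mem_toFinset.mp hq))) ?_ ?_
  · intro b hb
    obtain ⟨q, hq, rfl⟩ := List.mem_map.mp (List.mem_toFinset.mp hb)
    refine ⟨q.2, fun i hi j hj hi' hj' => ?_⟩
    simp only [List.mem_toFinset] at hi hj
    have key : ∀ p ∈ α, Table.restrictRow E (w p) q.1 ≠ q.2 → p = q := fun p hp hp' => by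
      have : q.1 ∈ h.1.violationTable.dec (Table.restrictRow E (w p)) :=
        mem_violatedAttrs.mpr ⟨q, hq, hp', rfl⟩
      rw [hdec p hp, Finset.mem_singleton] at this
      exact h.1.eq_of_fst_eq hp hq this.symm
    rw [key i hi hi', key j hj hj']
  · intro i hi j hj hij
    simp only [Finset.mem_coe, List.mem_toFinset] at hi hj
    rw [Function.onFun, hdec i hi, hdec j hj, Finset.disjoint_singleton]
    exact fun h1 => hij (h.1.eq_of_fst_eq hi hj h1)

end isIrredAnnih

theorem length_le_Hfun_add_one {A : Set (Table 2)} (hclosed : IsClosedClass A) (ψ : BCM)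
    {n : ℕ} (hH : (HSet ψ.toPBCM A n).Finite) {T : Table 2} (hTA : T ∈ A)
    (hmT : mpsi ψ.toPBCM T ≤ n) {α : List (ℕ × ℕ)} (hα : isIrredAnnih T α) :
    α.length ≤ Hfun ψ.toPBCM A n + 1 := by
  obtain rfl | hne := eq_or_ne α []
  · simp
  have hT := hα.rows_nonempty hne
  have hQA := hclosed T hTA hα.1.violationTable_mem_closureT
  calc α.length ≤ psiD ψ.toPBCM hα.1.violationTable + 1 :=
        hα.length_le_psiD_violationTable_add_one ψ hT
    _ ≤ Hfun ψ.toPBCM A n + 1 := by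
      gcongr
      exact le_csSup hH.bddAbove ⟨_, hQA, hα.1.psiA_violationTable_le ψ.toPBCM hT hmT, rfl⟩

theorem stmt18_general (A : Set (Table 2)) (hclosed : IsClosedClass A) (ψ : BCM)
    (hH : ∀ n, (HSet ψ.toPBCM A n).Finite) :
    ∀ n, (GSet ψ.toPBCM A n).Finite ∧
      Gfun ψ.toPBCM A n - 1 ≤ Hfun ψ.toPBCM A n := by
  intro n
  have hG : ∀ g ∈ GSet ψ.toPBCM A n, g ≤ Hfun ψ.toPBCM A n + 1 := by
    rintro _ ⟨T, hTA, hmT, rfl⟩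
    exact csSup_le' fun _ ⟨α, hα, hlen⟩ =>
      hlen ▸ length_le_Hfun_add_one hclosed ψ (hH n) hTA hmT hα
  exact ⟨(Set.finite_Iic _).subset hG, Nat.sub_le_iff_le_add.mpr (csSup_le' hG)⟩

/-- **Lemma (7M12).** If `H^∞_{ψ,A}` is everywhere defined then, for every `n`, `G_{ψ,A}(n)`
is defined and `H^∞_{ψ,A}(n) ≥ G_{ψ,A}(n) − 1`. -/
theorem stmt18 (A : Set (Table 2)) (hclosed : IsClosedClass A)
    (hnontriv : NontrivialClass A) (ψ : BCM)
    (hH : ∀ n, (HSet ψ.toPBCM A n).Finite) :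
    ∀ n, (GSet ψ.toPBCM A n).Finite ∧
      Gfun ψ.toPBCM A n - 1 ≤ Hfun ψ.toPBCM A n :=
  stmt18_general A hclosed ψ hH
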